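/- Let k ≥ 2 and set L = lcm(1, 2, …, k−1). For each G ∈ {Ñ_k, Ž_k}: there exist polynomials p_1, …, p_L ∈ ℚ[t] such that χ^quasi_G(q) = p_m(q) for every q ∈ ℤ_{>0} with q ≡ m (mod L); moreover, for every positive integer ρ for which there exists a family of polynomials f_1, …, f_ρ ∈ ℚ[t] with χ^quasi_G(q) = f_m(q) whenever q ≡ m (mod ρ), L divides ρ. In other words, the characteristic quasi-polynomials of Ñ_k and Ž_k (and hence their weight enumerators) are quasi-polynomials whose minimum period is lcm(1, 2, …, k−1). -/

import Mathlib

open scoped BigOperators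

namespace ArrCode

variable {k n : ℕ}

/-- The integer matrix `G` with entries reduced modulo `q`. -/
def Gmod (G : Matrix (Fin k) (Fin n) ℤ) (q : ℕ) : Matrix (Fin k) (Fin n) (ZMod q) :=
  G.map (Int.cast : ℤ → ZMod q)

/-- The code `C_G(q)` over `ℤ/qℤ` generated by the rows of `G`. -/
def code (G : Matrix (Fin k) (Fin n) ℤ) (q : ℕ) : Set (Fin n → ZMod q) :=
  Set.range fun u : Fin k → ZMod q => Matrix.vecMul u (Gmod G q)

/-- `H_J(q) = { u ∈ (ℤ/qℤ)^k : u · g^j = 0 for all j ∈ J }`. -/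
def HJ (G : Matrix (Fin k) (Fin n) ℤ) (J : Finset (Fin n)) (q : ℕ) :
    Set (Fin k → ZMod q) :=
  {u | ∀ j ∈ J, Matrix.vecMul u (Gmod G q) j = 0}

/-- The rank `r(J)` over `ℚ` of the column submatrix `G_J`. -/
noncomputable def rk (G : Matrix (Fin k) (Fin n) ℤ) (J : Finset (Fin n)) : ℕ :=
  Matrix.rank (Matrix.of fun (i : Fin k) (j : J) => (G i j.1 : ℚ))

/-- The gcd of all `j × j` minors of the column submatrix `G_J`
(determinants of submatrices with repeated rows or columns vanish,
so this agrees with the usual minor gcd). -/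
def minorGcd (G : Matrix (Fin k) (Fin n) ℤ) (J : Finset (Fin n)) (j : ℕ) : ℕ :=
  Finset.gcd Finset.univ fun p : (Fin j → Fin k) × (Fin j → J) =>
    ((G.submatrix p.1 fun l => (p.2 l : Fin n)).det).natAbs

/-- The `ℓ`-th elementary divisor (invariant factor) `e_{ℓ,J}` of `G_J`,
characterized by `e_{1,J} ⋯ e_{j,J} =` gcd of all `j × j` minors of `G_J`. -/
def elemDiv (G : Matrix (Fin k) (Fin n) ℤ) (J : Finset (Fin n)) (ℓ : ℕ) : ℕ :=
  minorGcd G J ℓ / minorGcd G J (ℓ - 1)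

/-- The lcm period `ρ₀ = lcm { e_{r(J),J} : ∅ ≠ J ⊆ E }`. -/
noncomputable def lcmPeriod (G : Matrix (Fin k) (Fin n) ℤ) : ℕ :=
  Finset.lcm ((Finset.univ : Finset (Fin n)).powerset.filter fun J => J ≠ ∅)
    fun J => elemDiv G J (rk G J)

/-- The minimum weight `d_q` of `C_G(q)` (equal to `+∞` when the code is trivial). -/
noncomputable def minWt (G : Matrix (Fin k) (Fin n) ℤ) (q : ℕ) : ℕ∞ :=
  ⨅ (c : Fin n → ZMod q) (_ : c ∈ code G q) (_ : c ≠ 0), (hammingNorm c : ℕ∞)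

/-- `A_{G,i}(q)`: the number of codewords of `C_G(q)` of Hamming weight `i`. -/
noncomputable def A (G : Matrix (Fin k) (Fin n) ℤ) (q i : ℕ) : ℕ :=
  {c ∈ code G q | hammingNorm c = i}.ncard

/-- The characteristic quasi-polynomial value: the number of `u ∈ (ℤ/qℤ)^k`
with every coordinate of `uG` nonzero. -/
noncomputable def chiQuasi (G : Matrix (Fin k) (Fin n) ℤ) (q : ℕ) : ℕ :=
  {u : Fin k → ZMod q | ∀ j, Matrix.vecMul u (Gmod G q) j ≠ 0}.ncard

/-- `Π_{ℓ=1}^{r(J)} gcd(m, e_{ℓ,J})`. -/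
noncomputable def gcdProd (G : Matrix (Fin k) (Fin n) ℤ) (m : ℕ) (J : Finset (Fin n)) : ℕ :=
  ∏ ℓ ∈ Finset.Icc 1 (rk G J), Nat.gcd m (elemDiv G J ℓ)

/-- The constituent polynomial `f_i^m(t) ∈ ℚ[t]`. -/
noncomputable def fPoly (G : Matrix (Fin k) (Fin n) ℤ) (m i : ℕ) : Polynomial ℚ :=
  ∑ J ∈ (Finset.univ : Finset (Fin n)).powerset.filter (fun J => J.card = n - i),
    ∑ K ∈ (Finset.univ : Finset (Fin n)).powerset.filter (fun K => J ⊆ K),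
      Polynomial.C ((-1 : ℚ) ^ (K.card - J.card) *
          (gcdProd G m K : ℚ) / (gcdProd G m Finset.univ : ℚ)) *
        Polynomial.X ^ (rk G Finset.univ - rk G K)

/-- `d'_m`: the least positive `i` such that `f_i^m` is not the zero polynomial. -/
noncomputable def dPrime (G : Matrix (Fin k) (Fin n) ℤ) (m : ℕ) : ℕ :=
  sInf {i : ℕ | 0 < i ∧ fPoly G m i ≠ 0}

end ArrCode

namespace ArrCode

/-- The matrix `Ñ_k = (I_k ∣ J_k − I_k)`. -/
def Ntilde (k : ℕ) : Matrix (Fin k) (Fin (2 * k)) ℤ :=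
  Matrix.of fun i j =>
    if (j : ℕ) < k then (if (i : ℕ) = (j : ℕ) then 1 else 0)
    else (if (i : ℕ) = (j : ℕ) - k then 0 else 1)

/-- The matrix `Ž_k = (I_k ∣ J_k − I_k ∣ 1_k)`. -/
def Ztilde (k : ℕ) : Matrix (Fin k) (Fin (2 * k + 1)) ℤ :=
  Matrix.of fun i j =>
    if (j : ℕ) < k then (if (i : ℕ) = (j : ℕ) then 1 else 0)
    else if (j : ℕ) < 2 * k then (if (i : ℕ) = (j : ℕ) - k then 0 else 1)
    else 1

/-- `ρ` is a quasi-polynomial period of `f`: there is a family of polynomials,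
one for each residue class modulo `ρ`, interpolating `f` on positive integers. -/
def IsQuasiPolyPeriod (f : ℕ → ℕ) (ρ : ℕ) : Prop :=
  ∃ p : ℕ → Polynomial ℚ, ∀ q : ℕ, 0 < q → (f q : ℚ) = (p (q % ρ)).eval (q : ℚ)

/-!
Writing `s = ∑ uᵢ`, the columns of `Ñ_k` say that `uᵢ ∉ {0, s}` for every `i`, and `Ž_k` adds
`s ≠ 0`; so `χ(q)` counts, for each `s`, the `k`-tuples from `{0, s}ᶜ` with sum `s`. In a finite
abelian group of order `n`, inclusion–exclusion gives
`n · #{u ∈ (Bᶜ)ᵏ | ∑ u = t} = (n - |B|)ᵏ - (-|B|)ᵏ + (-1)ᵏ n · #{u ∈ Bᵏ | ∑ u = t}`,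
and a tuple from `{0, s}` is the indicator of a set `I ⊆ [k]`, with sum `|I| • s`. Counting the
`s ≠ 0` with `(|I| - 1) • s = 0` in the cyclic group `ℤ/qℤ` gives `gcd(|I| - 1, q) - 1`, hence
`χ(q) = P(q) + (-1)ᵏ ∑_{j=1}^{k-1} C(k, j+1) gcd(j, q)` for a polynomial `P`.

Such a function has period `L = lcm(1, …, k-1)`. If `ρ` is a period and some `j ≤ k - 1` does not
divide `ρ`, the constituent of the class of `L` modulo `ρ` agrees with `P` plus the maximal value
of the gcd sum at the infinitely many multiples of `L` in that class, hence everywhere on it; but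
at `q = L + ρ` we have `gcd(j, q) < j`.
-/

open Finset Polynomial

section AddCommGroup

variable {G : Type*} [AddCommGroup G] [DecidableEq G]

def sumCount (A : Finset G) (k : ℕ) (t : G) : ℕ :=
  #{u ∈ Fintype.piFinset fun _ : Fin k => A | ∑ i, u i = t}

lemma sumCount_zero (A : Finset G) (t : G) : sumCount A 0 t = if t = 0 then 1 else 0 := by
  by_cases ht : t = 0 <;> simp [sumCount, ht, eq_comm]

lemma sumCount_succ (A : Finset G) (k : ℕ) (t : G) :
    sumCount A (k + 1) t = ∑ a ∈ A, sumCount A k (t - a) := by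
  simp_rw [sumCount, ← card_sigma]
  refine card_nbij' (fun u => ⟨u 0, Fin.tail u⟩) (fun p => Fin.cons p.1 p.2) ?_ ?_ ?_ ?_
  · intro u hu
    rw [mem_coe, mem_filter, Fintype.mem_piFinset] at hu
    simp [Fin.tail, hu.1, ← hu.2, Fin.sum_univ_succ]
  · rintro ⟨a, v⟩ hv
    rw [mem_coe, mem_sigma, mem_filter, Fintype.mem_piFinset] at hv
    simp [Fin.forall_fin_succ, Fin.sum_univ_succ, hv.1, hv.2.1, hv.2.2]
  · intro u _
    simp
  · rintro ⟨a, v⟩ _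
    simp

theorem sumCount_pair {s : G} (hs : s ≠ 0) (k : ℕ) (t : G) :
    sumCount {0, s} k t = #{I : Finset (Fin k) | #I • s = t} := by
  have hsum (I : Finset (Fin k)) : ∑ i, (if i ∈ I then s else 0) = #I • s := by
    rw [Fintype.sum_ite_mem, sum_const]
  have hind {u : Fin k → G} (hu : ∀ i, u i ∈ ({0, s} : Finset G)) :
      (fun i => if i ∈ ({i | u i = s} : Finset (Fin k)) then s else 0) = u := by
    ext i
    rcases mem_insert.1 (hu i) with h | h <;> simp_all [eq_comm]
  refine card_nbij' (fun u => ({i | u i = s} : Finset (Fin k)))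
    (fun I i => if i ∈ I then s else 0) ?_ ?_ ?_ ?_
  · intro u hu
    rw [mem_coe, mem_filter, Fintype.mem_piFinset] at hu
    rw [mem_coe, mem_filter, ← hsum, hind hu.1]
    exact ⟨mem_univ _, hu.2⟩
  · intro I hI
    rw [mem_coe, mem_filter] at hI
    rw [mem_coe, mem_filter, Fintype.mem_piFinset, hsum]
    refine ⟨fun i => ?_, hI.2⟩
    dsimp only
    split_ifs <;> simp
  · intro u hu
    rw [mem_coe, mem_filter, Fintype.mem_piFinset] at hu
    exact hind hu.1
  · intro I _
    ext i
    by_cases hi : i ∈ I <;> simp [hi, hs.symm]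

variable [Fintype G]

lemma sum_sumCount_sub (A : Finset G) (k : ℕ) (t : G) :
    ∑ x, sumCount A k (t - x) = #A ^ k := by
  refine ((Equiv.subLeft t).sum_comp (sumCount A k)).trans ?_
  rw [← Fintype.card_piFinset_const A k]
  exact (card_eq_sum_card_fiberwise fun _ _ => mem_univ _).symm

theorem sumCount_compl (B : Finset G) (k : ℕ) (t : G) :
    (Fintype.card G : ℤ) * sumCount Bᶜ k t =
      (Fintype.card G - #B) ^ k - (-#B : ℤ) ^ k +
        (-1) ^ k * Fintype.card G * sumCount B k t := by
  induction k generalizing t with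
  | zero => simp [sumCount_zero]
  | succ k ih =>
    have hsplit : (sumCount Bᶜ (k + 1) t : ℤ) =
        (Fintype.card G - #B) ^ k - ∑ b ∈ B, (sumCount Bᶜ k (t - b) : ℤ) := by
      have h := sum_compl_add_sum B fun a => sumCount Bᶜ k (t - a)
      rw [sum_sumCount_sub, card_compl] at h
      rw [sumCount_succ, eq_sub_iff_add_eq, ← Nat.cast_sub (card_le_univ B)]
      exact_mod_cast h
    rw [hsplit, sumCount_succ, mul_sub, mul_sum, sum_congr rfl fun b _ => ih (t - b)]
    simp only [sum_add_distrib, sum_sub_distrib, sum_const, nsmul_eq_mul, Nat.cast_sum,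
      ← mul_sum]
    ring

theorem card_filter_ne_zero_ne_sum (k : ℕ) (T : Finset G) :
    #{u : Fin k → G | (∀ i, u i ≠ 0 ∧ u i ≠ ∑ l, u l) ∧ ∑ l, u l ∈ T} =
      ∑ s ∈ T, sumCount {0, s}ᶜ k s := by
  rw [card_eq_sum_card_fiberwise (f := fun u => ∑ l, u l) (t := T)
    fun u hu => (mem_filter.1 hu).2.2]
  refine sum_congr rfl fun s hs => ?_
  rw [sumCount, filter_filter]
  congr 1
  ext u
  simp only [mem_filter, mem_univ, true_and, Fintype.mem_piFinset, mem_compl, mem_insert,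
    mem_singleton, not_or]
  constructor
  · rintro ⟨⟨h, -⟩, rfl⟩
    exact ⟨h, rfl⟩
  · rintro ⟨h, rfl⟩
    exact ⟨⟨h, hs⟩, rfl⟩

theorem card_nsmul_eq_zero [IsAddCyclic G] (j : ℕ) :
    #{s : G | j • s = 0} = Nat.gcd j (Fintype.card G) := by
  rw [Nat.gcd_comm, ← Nat.card_eq_fintype_card, ← IsAddCyclic.card_nsmulAddMonoidHom_ker G j,
    ← Fintype.card_subtype, Nat.card_eq_fintype_card]
  exact Fintype.card_congr (Equiv.subtypeEquivRight fun s => by simp)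

theorem sum_card_nsmul_eq_self [IsAddCyclic G] (k : ℕ) :
    (∑ s ∈ ({0}ᶜ : Finset G), #{I : Finset (Fin k) | #I • s = s} : ℤ) =
      ∑ j ∈ range k, (k.choose (j + 1) : ℤ) * (Nat.gcd j (Fintype.card G) - 1) := by
  have hswap : ∑ s ∈ ({0}ᶜ : Finset G), #{I : Finset (Fin k) | #I • s = s} =
      ∑ I : Finset (Fin k), #{s ∈ ({0}ᶜ : Finset G) | #I • s = s} := by
    simp only [card_filter]
    exact sum_comm
  have hzero : #{s ∈ ({0}ᶜ : Finset G) | 0 • s = s} = 0 := by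
    rw [card_eq_zero, filter_eq_empty_iff]
    exact fun s hs h => mem_compl.1 hs (mem_singleton.2 (h.symm.trans (zero_smul ℕ s)))
  have hsucc (j : ℕ) : (#{s ∈ ({0}ᶜ : Finset G) | (j + 1) • s = s} : ℤ) =
      Nat.gcd j (Fintype.card G) - 1 := by
    have h : {s ∈ ({0}ᶜ : Finset G) | (j + 1) • s = s} = ({s | j • s = 0} : Finset G).erase 0 := by
      ext s
      simp [succ_nsmul, and_comm]
    rw [h, card_erase_of_mem (by simp), card_nsmul_eq_zero, Nat.cast_sub]
    · simp
    · exact Nat.gcd_pos_of_pos_right _ Fintype.card_pos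
  rw [← Nat.cast_sum, hswap, ← powerset_univ,
    sum_powerset_apply_card fun m => #{s ∈ ({0}ᶜ : Finset G) | m • s = s}, card_univ,
    Fintype.card_fin, sum_range_succ']
  push_cast
  simp only [hsucc, hzero, smul_eq_mul, Nat.cast_mul, Nat.cast_zero, mul_zero, add_zero]

end AddCommGroup

section Matrices

variable {k q : ℕ}

lemma vecMul_Gmod_apply {n : ℕ} (M : Matrix (Fin k) (Fin n) ℤ) (u : Fin k → ZMod q)
    (j : Fin n) : Matrix.vecMul u (Gmod M q) j = ∑ i, u i * (M i j : ZMod q) :=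
  rfl

lemma vecMul_Ntilde_left (u : Fin k → ZMod q) (i : Fin k) :
    Matrix.vecMul u (Gmod (Ntilde k) q) ⟨i, by omega⟩ = u i := by
  simp [vecMul_Gmod_apply, Ntilde, Fin.val_inj]

lemma vecMul_Ntilde_right (u : Fin k → ZMod q) (i : Fin k) :
    Matrix.vecMul u (Gmod (Ntilde k) q) ⟨k + i, by omega⟩ = ∑ l, u l - u i := by
  simp only [Ntilde, vecMul_Gmod_apply, Matrix.of_apply, add_lt_iff_neg_left, not_lt_zero,
    ↓reduceIte, add_tsub_cancel_left, Fin.val_inj, Int.cast_ite, Int.cast_zero, Int.cast_one,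
    mul_ite, mul_zero, mul_one]
  rw [sum_ite, sum_const_zero, zero_add, filter_ne', sum_erase_eq_sub (mem_univ i)]

lemma Ztilde_castSucc (i : Fin k) (j : Fin (2 * k)) : Ztilde k i j.castSucc = Ntilde k i j := by
  simp [Ztilde, Ntilde, j.2]

lemma Ztilde_last (i : Fin k) : Ztilde k i (Fin.last _) = 1 := by
  simp [Ztilde, show ¬ 2 * k < k by omega]

lemma forall_vecMul_Ntilde_ne_zero_iff (u : Fin k → ZMod q) :
    (∀ j, Matrix.vecMul u (Gmod (Ntilde k) q) j ≠ 0) ↔ ∀ i, u i ≠ 0 ∧ u i ≠ ∑ l, u l := by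
  refine ⟨fun h i => ⟨?_, ?_⟩, fun h j => ?_⟩
  · simpa [vecMul_Ntilde_left] using h ⟨i, by omega⟩
  · simpa [vecMul_Ntilde_right, sub_eq_zero, eq_comm] using h ⟨k + i, by omega⟩
  · by_cases hj : (j : ℕ) < k
    · exact vecMul_Ntilde_left u ⟨j, hj⟩ ▸ (h _).1
    · have hj' : j = ⟨k + (⟨j - k, by omega⟩ : Fin k), by omega⟩ := Fin.ext (by simp; omega)
      rw [hj', vecMul_Ntilde_right, sub_ne_zero]
      exact (h _).2.symm

lemma forall_vecMul_Ztilde_ne_zero_iff (u : Fin k → ZMod q) :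
    (∀ j, Matrix.vecMul u (Gmod (Ztilde k) q) j ≠ 0) ↔
      (∀ i, u i ≠ 0 ∧ u i ≠ ∑ l, u l) ∧ ∑ l, u l ≠ 0 := by
  have hcast (j : Fin (2 * k)) : Matrix.vecMul u (Gmod (Ztilde k) q) j.castSucc =
      Matrix.vecMul u (Gmod (Ntilde k) q) j := by
    simp only [vecMul_Gmod_apply, Ztilde_castSucc]
  have hlast : Matrix.vecMul u (Gmod (Ztilde k) q) (Fin.last _) = ∑ l, u l := by
    simp [vecMul_Gmod_apply, Ztilde_last]
  rw [Fin.forall_fin_succ', ← forall_vecMul_Ntilde_ne_zero_iff, hlast]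
  simp only [hcast]

end Matrices

lemma chiQuasi_Ntilde_eq (q : ℕ) [NeZero q] (k : ℕ) :
    chiQuasi (Ntilde k) q = ∑ s : ZMod q, sumCount {0, s}ᶜ k s := by
  rw [← card_filter_ne_zero_ne_sum, chiQuasi, Set.ncard_eq_toFinset_card']
  simp [forall_vecMul_Ntilde_ne_zero_iff]

lemma chiQuasi_Ztilde_eq (q : ℕ) [NeZero q] (k : ℕ) :
    chiQuasi (Ztilde k) q = ∑ s ∈ {0}ᶜ, sumCount ({0, s}ᶜ : Finset (ZMod q)) k s := by
  rw [← card_filter_ne_zero_ne_sum, chiQuasi, Set.ncard_eq_toFinset_card']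
  simp [forall_vecMul_Ztilde_ne_zero_iff]

theorem mul_chiQuasi_Ztilde (q : ℕ) [NeZero q] (k : ℕ) :
    (q : ℤ) * chiQuasi (Ztilde k) q = (q - 1) * ((q - 2) ^ k - (-2) ^ k) +
      (-1) ^ k * q * ∑ j ∈ range k, (k.choose (j + 1) : ℤ) * (Nat.gcd j q - 1) := by
  have hterm (s : ZMod q) (hs : s ∈ ({0}ᶜ : Finset (ZMod q))) :
      (q : ℤ) * sumCount {0, s}ᶜ k s =
        (q - 2) ^ k - (-2) ^ k + (-1) ^ k * q * #{I : Finset (Fin k) | #I • s = s} := by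
    have hs0 : s ≠ 0 := by simpa using hs
    have h := sumCount_compl ({0, s} : Finset (ZMod q)) k s
    rwa [ZMod.card, card_pair hs0.symm, sumCount_pair hs0] at h
  have hcard : (#({0}ᶜ : Finset (ZMod q)) : ℤ) = q - 1 := by
    rw [card_compl, card_singleton, ZMod.card, Nat.cast_sub NeZero.one_le, Nat.cast_one]
  rw [chiQuasi_Ztilde_eq, Nat.cast_sum, mul_sum, sum_congr rfl hterm, sum_add_distrib,
    sum_const, ← mul_sum, sum_card_nsmul_eq_self, ZMod.card, nsmul_eq_mul, hcard]

theorem mul_chiQuasi_Ntilde (q : ℕ) [NeZero q] (k : ℕ) :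
    (q : ℤ) * chiQuasi (Ntilde k) q =
      q * chiQuasi (Ztilde k) q + ((q - 1) ^ k - (-1) ^ k + (-1) ^ k * q) := by
  have h := sumCount_compl ({0} : Finset (ZMod q)) k 0
  have hone : sumCount ({0} : Finset (ZMod q)) k 0 = 1 := by
    simp [sumCount, ← Pi.zero_def, filter_singleton]
  rw [ZMod.card, card_singleton, hone] at h
  rw [chiQuasi_Ntilde_eq, Fintype.sum_eq_add_sum_compl 0, ← chiQuasi_Ztilde_eq,
    pair_eq_singleton]
  push_cast
  linear_combination h

section Period

variable (S : Finset ℕ) (w : ℕ → ℕ)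

def weightedGcdSum (q : ℕ) : ℕ :=
  ∑ j ∈ S, w j * Nat.gcd j q

lemma weightedGcdSum_mod_lcm (q : ℕ) :
    weightedGcdSum S w (q % S.lcm id) = weightedGcdSum S w q := by
  refine sum_congr rfl fun j hj => ?_
  have hjL : j ∣ S.lcm id := dvd_lcm hj
  rw [Nat.gcd_rec, Nat.mod_mod_of_dvd q hjL, ← Nat.gcd_rec]

lemma weightedGcdSum_of_lcm_dvd {q : ℕ} (hq : S.lcm id ∣ q) :
    weightedGcdSum S w q = ∑ j ∈ S, w j * j := by
  refine sum_congr rfl fun j hj => ?_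
  have hjL : j ∣ S.lcm id := dvd_lcm hj
  rw [Nat.gcd_eq_left (hjL.trans hq)]

lemma weightedGcdSum_lt (hS : ∀ j ∈ S, 0 < j) (hw : ∀ j ∈ S, 0 < w j) {j q : ℕ} (hj : j ∈ S)
    (hjq : ¬ j ∣ q) : weightedGcdSum S w q < ∑ j ∈ S, w j * j := by
  refine sum_lt_sum (fun i hi => Nat.mul_le_mul_left _ (Nat.gcd_le_left q (hS i hi)))
    ⟨j, hj, Nat.mul_lt_mul_of_pos_left ?_ (hw j hj)⟩
  exact lt_of_le_of_ne (Nat.gcd_le_left q (hS j hj)) (mt Nat.gcd_eq_left_iff_dvd.1 hjq)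

variable {S w} {f : ℕ → ℕ} {P : ℚ[X]} {c : ℚ}

theorem isQuasiPolyPeriod_lcm
    (hf : ∀ q, 0 < q → (f q : ℚ) = P.eval (q : ℚ) + c * weightedGcdSum S w q) :
    IsQuasiPolyPeriod f (S.lcm id) :=
  ⟨fun m => P + C (c * weightedGcdSum S w m), fun q hq => by
    simp only [hf q hq, weightedGcdSum_mod_lcm, eval_add, eval_C]⟩

theorem lcm_dvd_of_isQuasiPolyPeriod (hS : ∀ j ∈ S, 0 < j) (hw : ∀ j ∈ S, 0 < w j) (hc : c ≠ 0)
    (hf : ∀ q, 0 < q → (f q : ℚ) = P.eval (q : ℚ) + c * weightedGcdSum S w q)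
    {ρ : ℕ} (hρ : 0 < ρ) (hfρ : IsQuasiPolyPeriod f ρ) : S.lcm id ∣ ρ := by
  obtain ⟨p, hp⟩ := hfρ
  set L := S.lcm id
  have hL : 0 < L := Nat.pos_of_ne_zero <| by
    rw [Ne, Finset.lcm_eq_zero_iff]
    rintro ⟨j, hj, h0⟩
    exact (hS j hj).ne' h0
  have hconst : p (L % ρ) = P + C (c * ∑ j ∈ S, w j * j) := by
    refine eq_of_infinite_eval_eq _ _ <| Set.infinite_of_injective_forall_mem
      (f := fun t : ℕ => ((L * (ρ * t + 1) : ℕ) : ℚ)) (fun t t' h => ?_) fun t => ?_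
    · have h' := Nat.eq_of_mul_eq_mul_left hL (Nat.cast_injective h)
      exact Nat.eq_of_mul_eq_mul_left hρ (by omega)
    · have hmod : L * (ρ * t + 1) % ρ = L % ρ := by
        rw [show L * (ρ * t + 1) = L + ρ * (L * t) by ring, Nat.add_mul_mod_self_left]
      have hpos : 0 < L * (ρ * t + 1) := by positivity
      rw [Set.mem_ofPred_eq, ← hmod, ← hp _ hpos, hf _ hpos, eval_add, eval_C,
        weightedGcdSum_of_lcm_dvd S w (dvd_mul_right L _)]
  refine lcm_dvd_iff.2 fun j hj => ?_
  by_contra hjρ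
  have hjL : j ∣ L := dvd_lcm hj
  have hlt := weightedGcdSum_lt S w hS hw hj (q := L + ρ)
    fun h => hjρ ((Nat.dvd_add_right hjL).1 h)
  have heq := hp (L + ρ) (by omega)
  rw [Nat.add_mod_right, hconst, hf _ (by omega), eval_add, eval_C, add_right_inj,
    mul_right_inj' hc] at heq
  exact hlt.ne (by exact_mod_cast heq)

end Period

lemma exists_eval_eq_of_mul_eq_eval {f : ℕ → ℚ} (R : ℚ[X]) (hR : R.eval 0 = 0)
    (h : ∀ q : ℕ, 0 < q → (q : ℚ) * f q = R.eval (q : ℚ)) :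
    ∃ P : ℚ[X], ∀ q, 0 < q → f q = P.eval (q : ℚ) := by
  obtain ⟨P, rfl⟩ := (X_dvd_iff (f := R)).2 (by rwa [coeff_zero_eq_eval_zero])
  refine ⟨P, fun q hq => mul_left_cancel₀ (Nat.cast_ne_zero.2 hq.ne') ?_⟩
  rw [h q hq, eval_mul, eval_X]

lemma sum_range_choose_mul_gcd_sub_one (k q : ℕ) :
    ∑ j ∈ range k, (k.choose (j + 1) : ℚ) * (Nat.gcd j q - 1) =
      k * (q - 1) + weightedGcdSum (Icc 1 (k - 1)) (fun j => k.choose (j + 1)) q -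
        ∑ j ∈ Icc 1 (k - 1), (k.choose (j + 1) : ℚ) := by
  rcases k with _ | k
  · simp [weightedGcdSum]
  rw [show range (k + 1) = insert 0 (Icc 1 k) by ext; simp; omega, sum_insert (by simp)]
  simp only [zero_add, Nat.choose_one_right, Nat.cast_add, Nat.cast_one, Nat.gcd_zero_left,
    mul_sub, mul_one, sum_sub_distrib, weightedGcdSum, add_tsub_cancel_right, Nat.cast_sum,
    Nat.cast_mul]
  ring

theorem exists_chiQuasi_Ztilde_eq (k : ℕ) : ∃ P : ℚ[X], ∀ q, 0 < q →
    (chiQuasi (Ztilde k) q : ℚ) =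
      P.eval (q : ℚ) + (-1) ^ k * weightedGcdSum (Icc 1 (k - 1)) (fun j => k.choose (j + 1)) q := by
  refine (exists_eval_eq_of_mul_eq_eval
    (f := fun q => (chiQuasi (Ztilde k) q : ℚ) -
      (-1) ^ k * weightedGcdSum (Icc 1 (k - 1)) (fun j => k.choose (j + 1)) q)
    ((X - 1) * ((X - 2) ^ k - C ((-2) ^ k)) +
      C ((-1) ^ k) * X * (C (k : ℚ) * (X - 1) - C (∑ j ∈ Icc 1 (k - 1), (k.choose (j + 1) : ℚ))))
    (by simp) fun q hq => ?_).imp fun P hP q hq => by linear_combination hP q hq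
  have : NeZero q := ⟨hq.ne'⟩
  have h : ((q : ℤ) * chiQuasi (Ztilde k) q : ℚ) = (q - 1) * ((q - 2) ^ k - (-2) ^ k) +
      (-1) ^ k * q * ∑ j ∈ range k, (k.choose (j + 1) : ℚ) * (Nat.gcd j q - 1) := by
    exact_mod_cast mul_chiQuasi_Ztilde q k
  rw [sum_range_choose_mul_gcd_sub_one] at h
  simp only [eval_add, eval_mul, eval_sub, eval_pow, eval_X, eval_C, eval_one, eval_ofNat]
  push_cast at h
  linear_combination h

theorem exists_chiQuasi_Ntilde_eq (k : ℕ) : ∃ P : ℚ[X], ∀ q, 0 < q →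
    (chiQuasi (Ntilde k) q : ℚ) =
      P.eval (q : ℚ) + (-1) ^ k * weightedGcdSum (Icc 1 (k - 1)) (fun j => k.choose (j + 1)) q := by
  obtain ⟨PZ, hPZ⟩ := exists_chiQuasi_Ztilde_eq k
  have hdiff : ∃ P : ℚ[X], ∀ q, 0 < q →
      (chiQuasi (Ntilde k) q : ℚ) - chiQuasi (Ztilde k) q = P.eval (q : ℚ) := by
    refine exists_eval_eq_of_mul_eq_eval ((X - 1) ^ k - C ((-1) ^ k) + C ((-1) ^ k) * X)
      (by simp) fun q hq => ?_
    have : NeZero q := ⟨hq.ne'⟩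
    have h : ((q : ℤ) * chiQuasi (Ntilde k) q : ℚ) =
        q * chiQuasi (Ztilde k) q + ((q - 1) ^ k - (-1) ^ k + (-1) ^ k * q) := by
      exact_mod_cast mul_chiQuasi_Ntilde q k
    simp only [eval_add, eval_mul, eval_sub, eval_pow, eval_X, eval_C, eval_one]
    push_cast at h
    linear_combination h
  obtain ⟨P, hP⟩ := hdiff
  exact ⟨PZ + P, fun q hq => by rw [eval_add]; linear_combination hP q hq + hPZ q hq⟩

theorem stmt19_general (k : ℕ) :
    (IsQuasiPolyPeriod (chiQuasi (Ntilde k)) ((Finset.Icc 1 (k - 1)).lcm id) ∧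
      ∀ ρ : ℕ, 0 < ρ → IsQuasiPolyPeriod (chiQuasi (Ntilde k)) ρ →
        (Finset.Icc 1 (k - 1)).lcm id ∣ ρ) ∧
    (IsQuasiPolyPeriod (chiQuasi (Ztilde k)) ((Finset.Icc 1 (k - 1)).lcm id) ∧
      ∀ ρ : ℕ, 0 < ρ → IsQuasiPolyPeriod (chiQuasi (Ztilde k)) ρ →
        (Finset.Icc 1 (k - 1)).lcm id ∣ ρ) := by
  obtain ⟨PN, hN⟩ := exists_chiQuasi_Ntilde_eq k
  obtain ⟨PZ, hZ⟩ := exists_chiQuasi_Ztilde_eq k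
  have hS : ∀ j ∈ Icc 1 (k - 1), 0 < j := fun j hj => (mem_Icc.1 hj).1
  have hw : ∀ j ∈ Icc 1 (k - 1), 0 < k.choose (j + 1) := fun j hj =>
    Nat.choose_pos (by have := mem_Icc.1 hj; omega)
  have hc : (-1 : ℚ) ^ k ≠ 0 := pow_ne_zero k (by norm_num)
  exact ⟨⟨isQuasiPolyPeriod_lcm hN, fun ρ hρ => lcm_dvd_of_isQuasiPolyPeriod hS hw hc hN hρ⟩,
    ⟨isQuasiPolyPeriod_lcm hZ, fun ρ hρ => lcm_dvd_of_isQuasiPolyPeriod hS hw hc hZ hρ⟩⟩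

theorem stmt19 (k : ℕ) (hk : 2 ≤ k) :
    (IsQuasiPolyPeriod (chiQuasi (Ntilde k)) ((Finset.Icc 1 (k - 1)).lcm id) ∧
      ∀ ρ : ℕ, 0 < ρ → IsQuasiPolyPeriod (chiQuasi (Ntilde k)) ρ →
        (Finset.Icc 1 (k - 1)).lcm id ∣ ρ) ∧
    (IsQuasiPolyPeriod (chiQuasi (Ztilde k)) ((Finset.Icc 1 (k - 1)).lcm id) ∧
      ∀ ρ : ℕ, 0 < ρ → IsQuasiPolyPeriod (chiQuasi (Ztilde k)) ρ →
        (Finset.Icc 1 (k - 1)).lcm id ∣ ρ) :=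
  stmt19_general k

end ArrCode
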